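/- Let A ∈ ℂ^{M×N_a} and B ∈ ℂ^{M×N_b} be matrices with unit ℓ²-norm columns, with coherences μ_a and μ_b respectively and mutual coherence μ_m. Let X ⊆ {1,…,N_a} and E ⊆ {1,…,N_b} with |X| = n_x and |E| = n_e. If μ_m² · n_x · n_e < [1 − μ_a(n_x−1)]_+ · [1 − μ_b(n_e−1)]_+, then the concatenated matrix D_{X,E} = [A_X B_E] ∈ ℂ^{M×(n_x+n_e)} has linearly independent columns (full column rank). -/

import Mathlib

open scoped BigOperators ComplexConjugate
open Matrix

/-- Coherence of a matrix: max over distinct column pairs of |aₖᴴ aₗ| (0 if fewer than 2 columns). -/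
noncomputable def coh {m n : Type*} [Fintype m] [Fintype n] (A : Matrix m n ℂ) : ℝ :=
  ⨆ k, ⨆ l, ⨆ _ : k ≠ l, ‖∑ i, conj (A i k) * A i l‖

/-- Mutual coherence between two matrices: max over column pairs of |aₖᴴ bₗ|. -/
noncomputable def mcoh {m na nb : Type*} [Fintype m] [Fintype na] [Fintype nb]
    (A : Matrix m na ℂ) (B : Matrix m nb ℂ) : ℝ :=
  ⨆ k, ⨆ l, ‖∑ i, conj (A i k) * B i l‖

/-- All columns have unit ℓ²-norm. -/
def unitCols {m n : Type*} [Fintype m] (A : Matrix m n ℂ) : Prop :=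
  ∀ k, ∑ i, ‖A i k‖ ^ 2 = 1

/-- Number of nonzero entries of a vector. -/
noncomputable def l0 {n : Type*} (v : n → ℂ) : ℕ := {i | v i ≠ 0}.ncard

/-- ℓ¹ norm of a vector. -/
noncomputable def l1 {n : Type*} [Fintype n] (v : n → ℂ) : ℝ := ∑ i, ‖v i‖

/-- Squared ℓ² norm of a vector. -/
noncomputable def l2sq {n : Type*} [Fintype n] (v : n → ℂ) : ℝ := ∑ i, ‖v i‖ ^ 2

/-- Submatrix consisting of the columns with index in `E`. -/
def colsub {m n : Type*} (B : Matrix m n ℂ) (E : Finset n) : Matrix m {j // j ∈ E} ℂ :=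
  fun i j => B i j.val

/-- Orthogonal projector onto the orthogonal complement of the column span of `B_E`. -/
noncomputable def projC {m n : Type*} [Fintype m] [DecidableEq m] [DecidableEq n]
    (B : Matrix m n ℂ) (E : Finset n) : Matrix m m ℂ :=
  1 - colsub B E * ((colsub B E)ᴴ * colsub B E)⁻¹ * (colsub B E)ᴴ
lemma le_coh' {m n : Type*} [Fintype m] [Fintype n] (A : Matrix m n ℂ) {k l : n} (h : k ≠ l) :
    ‖∑ i, conj (A i k) * A i l‖ ≤ coh A := by
  rw [show ‖∑ i, conj (A i k) * A i l‖ = ⨆ _ : k ≠ l, ‖∑ i, conj (A i k) * A i l‖ from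
    (ciSup_pos (f := fun _ => ‖∑ i, conj (A i k) * A i l‖) h).symm]
  refine le_trans (le_ciSup (f := fun l => ⨆ _ : k ≠ l, ‖∑ i, conj (A i k) * A i l‖)
    (Set.Finite.bddAbove (Set.finite_range _)) l) ?_
  exact le_ciSup (f := fun k => ⨆ l, ⨆ _ : k ≠ l, ‖∑ i, conj (A i k) * A i l‖)
    (Set.Finite.bddAbove (Set.finite_range _)) k

lemma le_mcoh' {m na nb : Type*} [Fintype m] [Fintype na] [Fintype nb]
    (A : Matrix m na ℂ) (B : Matrix m nb ℂ) (k : na) (l : nb) :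
    ‖∑ i, conj (A i k) * B i l‖ ≤ mcoh A B := by
  refine le_trans (le_ciSup (f := fun l => ‖∑ i, conj (A i k) * B i l‖)
    (Set.Finite.bddAbove (Set.finite_range _)) l) ?_
  exact le_ciSup (f := fun k => ⨆ l, ‖∑ i, conj (A i k) * B i l‖)
    (Set.Finite.bddAbove (Set.finite_range _)) k

lemma coh_nonneg' {m n : Type*} [Fintype m] [Fintype n] (A : Matrix m n ℂ) : 0 ≤ coh A :=
  Real.iSup_nonneg fun _ => Real.iSup_nonneg fun _ => Real.iSup_nonneg fun _ => norm_nonneg _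

lemma mcoh_nonneg' {m na nb : Type*} [Fintype m] [Fintype na] [Fintype nb]
    (A : Matrix m na ℂ) (B : Matrix m nb ℂ) : 0 ≤ mcoh A B :=
  Real.iSup_nonneg fun _ => Real.iSup_nonneg fun _ => norm_nonneg _

lemma conj_mul_self' (z : ℂ) : conj z * z = ((‖z‖ ^ 2 : ℝ) : ℂ) := by
  rw [mul_comm, Complex.mul_conj, Complex.normSq_eq_norm_sq,
    Complex.ofReal_pow]

lemma sum_conj_mul_expand {M : ℕ} {ι κ : Type*} [Fintype ι] [Fintype κ]
    (u : ι → ℂ) (v : κ → ℂ) (U : Fin M → ι → ℂ) (V : Fin M → κ → ℂ) :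
    ∑ i, conj (∑ k, u k * U i k) * (∑ l, v l * V i l)
      = ∑ k, ∑ l, (conj (u k) * v l) * ∑ i, conj (U i k) * V i l := by
  simp_rw [map_sum, _root_.map_mul, Finset.sum_mul_sum, Finset.mul_sum]
  rw [Finset.sum_comm]
  refine Finset.sum_congr rfl fun k _ => ?_
  rw [Finset.sum_comm]
  refine Finset.sum_congr rfl fun l _ => ?_
  refine Finset.sum_congr rfl fun i _ => ?_
  ring


/-- Theorem 2: full column rank of the concatenated dictionary [A_X B_E]. -/
theorem concatenated_dictionary_full_rank
    {M Na Nb : ℕ} (A : Matrix (Fin M) (Fin Na) ℂ) (B : Matrix (Fin M) (Fin Nb) ℂ)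
    (hA : unitCols A) (hB : unitCols B)
    (μa μb μm : ℝ) (hμa : μa = coh A) (hμb : μb = coh B) (hμm : μm = mcoh A B)
    (X : Finset (Fin Na)) (E : Finset (Fin Nb)) (nx ne : ℕ)
    (hnx : X.card = nx) (hne : E.card = ne)
    (hcond : μm ^ 2 * nx * ne <
      max (1 - μa * ((nx : ℝ) - 1)) 0 * max (1 - μb * ((ne : ℝ) - 1)) 0) :
    LinearIndependent ℂ
      (Sum.elim (fun k : {k // k ∈ X} => fun i => A i k.val)
                (fun l : {l // l ∈ E} => fun i => B i l.val)) := by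
  have hμa0 : 0 ≤ μa := hμa ▸ coh_nonneg' A
  have hμb0 : 0 ≤ μb := hμb ▸ coh_nonneg' B
  have hμm0 : 0 ≤ μm := hμm ▸ mcoh_nonneg' A B
  -- positivity of the two factors
  have hprodnn : (0:ℝ) ≤ μm ^ 2 * nx * ne := by positivity
  have hα : 0 < 1 - μa * ((nx : ℝ) - 1) := by
    rcases le_or_gt (1 - μa * ((nx : ℝ) - 1)) 0 with h | h
    · rw [max_eq_right h, zero_mul] at hcond; linarith
    · exact h
  have hβ : 0 < 1 - μb * ((ne : ℝ) - 1) := by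
    rcases le_or_gt (1 - μb * ((ne : ℝ) - 1)) 0 with h | h
    · rw [max_eq_right h, mul_zero] at hcond; linarith
    · exact h
  have hAB : μm ^ 2 * nx * ne < (1 - μa * ((nx : ℝ) - 1)) * (1 - μb * ((ne : ℝ) - 1)) := by
    rwa [max_eq_left hα.le, max_eq_left hβ.le] at hcond
  rw [Fintype.linearIndependent_iff]
  intro g hg
  set c : {k // k ∈ X} → ℂ := fun k => g (Sum.inl k) with hc
  set d : {l // l ∈ E} → ℂ := fun l => g (Sum.inr l) with hd
  have hf : ∀ i : Fin M, (∑ k, c k * A i k.val) + (∑ l, d l * B i l.val) = 0 := by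
    intro i
    have := congrFun hg i
    simpa [hc, hd, Finset.sum_apply, Fintype.sum_sum_type, Pi.smul_apply, smul_eq_mul] using this
  -- the big Gram identity
  have hZ : ((∑ k, ∑ k', (conj (c k) * c k') * ∑ i, conj (A i k.val) * A i k'.val)
      + (∑ k, ∑ l, (conj (c k) * d l) * ∑ i, conj (A i k.val) * B i l.val))
      + ((∑ l, ∑ k, (conj (d l) * c k) * ∑ i, conj (B i l.val) * A i k.val)
      + (∑ l, ∑ l', (conj (d l) * d l') * ∑ i, conj (B i l.val) * B i l'.val)) = 0 := by
    rw [← sum_conj_mul_expand c c (fun i k => A i k.val) (fun i k => A i k.val),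
        ← sum_conj_mul_expand c d (fun i k => A i k.val) (fun i l => B i l.val),
        ← sum_conj_mul_expand d c (fun i l => B i l.val) (fun i k => A i k.val),
        ← sum_conj_mul_expand d d (fun i l => B i l.val) (fun i l => B i l.val),
        ← Finset.sum_add_distrib, ← Finset.sum_add_distrib, ← Finset.sum_add_distrib]
    refine Finset.sum_eq_zero fun i _ => ?_
    have h0 := hf i
    have h0' : conj (∑ k, c k * A i k.val) + conj (∑ l, d l * B i l.val) = 0 := by
      rw [← map_add, h0, map_zero]
    linear_combination (conj (∑ k, c k * A i k.val) + conj (∑ l, d l * B i l.val)) * h0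
  -- abbreviations
  set Sc : ℝ := ∑ k, ‖c k‖ ^ 2 with hSc
  set Sd : ℝ := ∑ l, ‖d l‖ ^ 2 with hSd
  set Lc : ℝ := ∑ k, ‖c k‖ with hLc
  set Ld : ℝ := ∑ l, ‖d l‖ with hLd
  have hScnn : 0 ≤ Sc := Finset.sum_nonneg fun _ _ => by positivity
  have hSdnn : 0 ≤ Sd := Finset.sum_nonneg fun _ _ => by positivity
  have hLcnn : 0 ≤ Lc := Finset.sum_nonneg fun _ _ => norm_nonneg _
  have hLdnn : 0 ≤ Ld := Finset.sum_nonneg fun _ _ => norm_nonneg _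
  -- split diagonals
  have hdiagA : (∑ k, ∑ k', (conj (c k) * c k') * ∑ i, conj (A i k.val) * A i k'.val)
      = (Sc : ℂ) + ∑ k, ∑ k' ∈ Finset.univ.erase k,
          (conj (c k) * c k') * ∑ i, conj (A i k.val) * A i k'.val := by
    have hdg : ∀ k : {k // k ∈ X},
        (conj (c k) * c k) * ∑ i, conj (A i k.val) * A i k.val = (‖c k‖ ^ 2 : ℝ) := by
      intro k
      have h1 : (∑ i, conj (A i k.val) * A i k.val) = (1 : ℂ) := by
        simp_rw [conj_mul_self', ← Complex.ofReal_sum, hA k.val, Complex.ofReal_one]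
      rw [h1, mul_one, conj_mul_self']
    calc (∑ k, ∑ k', (conj (c k) * c k') * ∑ i, conj (A i k.val) * A i k'.val)
        = ∑ k, ((conj (c k) * c k) * (∑ i, conj (A i k.val) * A i k.val)
            + ∑ k' ∈ Finset.univ.erase k,
              (conj (c k) * c k') * ∑ i, conj (A i k.val) * A i k'.val) := by
          exact Finset.sum_congr rfl fun k _ =>
            (Finset.add_sum_erase _ _ (Finset.mem_univ k)).symm
      _ = (Sc : ℂ) + _ := by
          rw [Finset.sum_add_distrib]
          congr 1
          simp_rw [hdg]
          push_cast [hSc]; ring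
  have hdiagB : (∑ l, ∑ l', (conj (d l) * d l') * ∑ i, conj (B i l.val) * B i l'.val)
      = (Sd : ℂ) + ∑ l, ∑ l' ∈ Finset.univ.erase l,
          (conj (d l) * d l') * ∑ i, conj (B i l.val) * B i l'.val := by
    have hdg : ∀ l : {l // l ∈ E},
        (conj (d l) * d l) * ∑ i, conj (B i l.val) * B i l.val = (‖d l‖ ^ 2 : ℝ) := by
      intro l
      have h1 : (∑ i, conj (B i l.val) * B i l.val) = (1 : ℂ) := by
        simp_rw [conj_mul_self', ← Complex.ofReal_sum, hB l.val, Complex.ofReal_one]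
      rw [h1, mul_one, conj_mul_self']
    calc (∑ l, ∑ l', (conj (d l) * d l') * ∑ i, conj (B i l.val) * B i l'.val)
        = ∑ l, ((conj (d l) * d l) * (∑ i, conj (B i l.val) * B i l.val)
            + ∑ l' ∈ Finset.univ.erase l,
              (conj (d l) * d l') * ∑ i, conj (B i l.val) * B i l'.val) := by
          exact Finset.sum_congr rfl fun l _ =>
            (Finset.add_sum_erase _ _ (Finset.mem_univ l)).symm
      _ = (Sd : ℂ) + _ := by
          rw [Finset.sum_add_distrib]
          congr 1
          simp_rw [hdg]
          push_cast [hSd]; ring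
  set RA : ℂ := ∑ k, ∑ k' ∈ Finset.univ.erase k,
      (conj (c k) * c k') * ∑ i, conj (A i k.val) * A i k'.val with hRA
  set RB : ℂ := ∑ l, ∑ l' ∈ Finset.univ.erase l,
      (conj (d l) * d l') * ∑ i, conj (B i l.val) * B i l'.val with hRB
  set T2 : ℂ := ∑ k, ∑ l, (conj (c k) * d l) * ∑ i, conj (A i k.val) * B i l.val with hT2
  set T3 : ℂ := ∑ l, ∑ k, (conj (d l) * c k) * ∑ i, conj (B i l.val) * A i k.val with hT3
  rw [hdiagA, hdiagB] at hZ
  -- real part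
  have hRe : Sc + Sd + (RA.re + T2.re + (T3.re + RB.re)) = 0 := by
    have := congrArg Complex.re hZ
    simp only [Complex.add_re, Complex.ofReal_re, Complex.zero_re] at this
    linarith
  -- bounds on the four remainder terms
  have hre : ∀ z : ℂ, -‖z‖ ≤ z.re := by
    intro z
    have h1 : |z.re| ≤ ‖z‖ := Complex.abs_re_le_norm z
    exact (abs_le.mp h1).1
  have hRAbd : ‖RA‖ ≤ μa * (Lc ^ 2 - Sc) := by
    rw [hRA]
    have step1 : ‖∑ k, ∑ k' ∈ Finset.univ.erase k,
          (conj (c k) * c k') * ∑ i, conj (A i k.val) * A i k'.val‖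
        ≤ ∑ k, ∑ k' ∈ Finset.univ.erase k, ‖c k‖ * ‖c k'‖ * μa := by
      refine (norm_sum_le _ _).trans (Finset.sum_le_sum fun k _ => ?_)
      refine (norm_sum_le _ _).trans (Finset.sum_le_sum fun k' hk' => ?_)
      have hne' : k.val ≠ k'.val := fun hv =>
        (Finset.mem_erase.mp hk').1 (Subtype.ext hv.symm)
      rw [norm_mul, norm_mul, RCLike.norm_conj]
      exact mul_le_mul_of_nonneg_left (hμa ▸ le_coh' A hne') (by positivity)
    refine step1.trans_eq ?_
    have inner : ∀ k : {k // k ∈ X},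
        ∑ k' ∈ Finset.univ.erase k, ‖c k‖ * ‖c k'‖ * μa = (‖c k‖ * Lc - ‖c k‖ ^ 2) * μa := by
      intro k
      rw [← Finset.sum_mul, ← Finset.mul_sum, Finset.sum_erase_eq_sub (Finset.mem_univ k),
        ← hLc]
      ring
    simp_rw [inner]
    rw [← Finset.sum_mul, Finset.sum_sub_distrib, ← Finset.sum_mul, ← hLc]
    have : (∑ k, ‖c k‖ ^ 2) = Sc := hSc.symm
    rw [this]
    ring
  have hRBbd : ‖RB‖ ≤ μb * (Ld ^ 2 - Sd) := by
    rw [hRB]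
    have step1 : ‖∑ l, ∑ l' ∈ Finset.univ.erase l,
          (conj (d l) * d l') * ∑ i, conj (B i l.val) * B i l'.val‖
        ≤ ∑ l, ∑ l' ∈ Finset.univ.erase l, ‖d l‖ * ‖d l'‖ * μb := by
      refine (norm_sum_le _ _).trans (Finset.sum_le_sum fun l _ => ?_)
      refine (norm_sum_le _ _).trans (Finset.sum_le_sum fun l' hl' => ?_)
      have hne' : l.val ≠ l'.val := fun hv =>
        (Finset.mem_erase.mp hl').1 (Subtype.ext hv.symm)
      rw [norm_mul, norm_mul, RCLike.norm_conj]
      exact mul_le_mul_of_nonneg_left (hμb ▸ le_coh' B hne') (by positivity)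
    refine step1.trans_eq ?_
    have inner : ∀ l : {l // l ∈ E},
        ∑ l' ∈ Finset.univ.erase l, ‖d l‖ * ‖d l'‖ * μb = (‖d l‖ * Ld - ‖d l‖ ^ 2) * μb := by
      intro l
      rw [← Finset.sum_mul, ← Finset.mul_sum, Finset.sum_erase_eq_sub (Finset.mem_univ l),
        ← hLd]
      ring
    simp_rw [inner]
    rw [← Finset.sum_mul, Finset.sum_sub_distrib, ← Finset.sum_mul, ← hLd]
    have : (∑ l, ‖d l‖ ^ 2) = Sd := hSd.symm
    rw [this]
    ring
  have hT2bd : ‖T2‖ ≤ μm * (Lc * Ld) := by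
    rw [hT2]
    have step1 : ‖∑ k, ∑ l, (conj (c k) * d l) * ∑ i, conj (A i k.val) * B i l.val‖
        ≤ ∑ k, ∑ l, ‖c k‖ * ‖d l‖ * μm := by
      refine (norm_sum_le _ _).trans (Finset.sum_le_sum fun k _ => ?_)
      refine (norm_sum_le _ _).trans (Finset.sum_le_sum fun l _ => ?_)
      rw [norm_mul, norm_mul, RCLike.norm_conj]
      exact mul_le_mul_of_nonneg_left (hμm ▸ le_mcoh' A B k.val l.val) (by positivity)
    refine step1.trans_eq ?_
    simp_rw [mul_assoc, ← Finset.mul_sum]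
    rw [← Finset.sum_mul, ← hLc, ← Finset.sum_mul, ← hLd]
    ring
  have hT3bd : ‖T3‖ ≤ μm * (Ld * Lc) := by
    rw [hT3]
    have step1 : ‖∑ l, ∑ k, (conj (d l) * c k) * ∑ i, conj (B i l.val) * A i k.val‖
        ≤ ∑ l, ∑ k, ‖d l‖ * ‖c k‖ * μm := by
      refine (norm_sum_le _ _).trans (Finset.sum_le_sum fun l _ => ?_)
      refine (norm_sum_le _ _).trans (Finset.sum_le_sum fun k _ => ?_)
      rw [norm_mul, norm_mul, RCLike.norm_conj]
      have hconj : (∑ i, conj (B i l.val) * A i k.val)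
          = conj (∑ i, conj (A i k.val) * B i l.val) := by
        rw [map_sum]
        exact Finset.sum_congr rfl fun i _ => by
          rw [_root_.map_mul, Complex.conj_conj]; ring
      rw [hconj, RCLike.norm_conj]
      exact mul_le_mul_of_nonneg_left (hμm ▸ le_mcoh' A B k.val l.val) (by positivity)
    refine step1.trans_eq ?_
    simp_rw [mul_assoc, ← Finset.mul_sum]
    rw [← Finset.sum_mul, ← hLd, ← Finset.sum_mul, ← hLc]
    ring
  -- Cauchy–Schwarz bounds
  have hLc2 : Lc ^ 2 ≤ (nx : ℝ) * Sc := by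
    rw [hLc, hSc, ← hnx]
    have := sq_sum_le_card_mul_sum_sq (s := (Finset.univ : Finset {k // k ∈ X}))
      (f := fun k => ‖c k‖)
    simpa [Finset.card_univ, Fintype.card_coe] using this
  have hLd2 : Ld ^ 2 ≤ (ne : ℝ) * Sd := by
    rw [hLd, hSd, ← hne]
    have := sq_sum_le_card_mul_sum_sq (s := (Finset.univ : Finset {l // l ∈ E}))
      (f := fun l => ‖d l‖)
    simpa [Finset.card_univ, Fintype.card_coe] using this
  -- the key real inequality
  have hkey : Sc + Sd ≤ μa * (Lc ^ 2 - Sc) + μb * (Ld ^ 2 - Sd)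
      + μm * (Lc * Ld) + μm * (Ld * Lc) := by
    have h1 := hre RA; have h2 := hre T2; have h3 := hre T3; have h4 := hre RB
    linarith [hRAbd, hRBbd, hT2bd, hT3bd, hRe]
  have hstar : (1 - μa * ((nx : ℝ) - 1)) * Sc + (1 - μb * ((ne : ℝ) - 1)) * Sd
      ≤ 2 * μm * (Lc * Ld) := by
    have e1 : μa * (Lc ^ 2 - Sc) ≤ μa * (((nx : ℝ) - 1) * Sc) :=
      mul_le_mul_of_nonneg_left (by linarith) hμa0
    have e2 : μb * (Ld ^ 2 - Sd) ≤ μb * (((ne : ℝ) - 1) * Sd) :=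
      mul_le_mul_of_nonneg_left (by linarith) hμb0
    linarith [hkey, e1, e2]
  -- vanishing of coefficients
  have hdzero : Sd = 0 → ∀ l, d l = 0 := by
    intro h l
    have hsum : ∑ l, ‖d l‖ ^ 2 = 0 := by rw [← hSd]; exact h
    have := (Finset.sum_eq_zero_iff_of_nonneg (fun i _ => by positivity)).mp hsum l
      (Finset.mem_univ l)
    have hn : ‖d l‖ = 0 := pow_eq_zero_iff (by norm_num : 2 ≠ 0) |>.mp this
    exact norm_eq_zero.mp hn
  have hczero : Sc = 0 → ∀ k, c k = 0 := by
    intro h k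
    have hsum : ∑ k, ‖c k‖ ^ 2 = 0 := by rw [← hSc]; exact h
    have := (Finset.sum_eq_zero_iff_of_nonneg (fun i _ => by positivity)).mp hsum k
      (Finset.mem_univ k)
    have hn : ‖c k‖ = 0 := pow_eq_zero_iff (by norm_num : 2 ≠ 0) |>.mp this
    exact norm_eq_zero.mp hn
  have hLd0 : Sd = 0 → Ld = 0 := by
    intro h
    rw [hLd]
    exact Finset.sum_eq_zero fun l _ => by rw [hdzero h l, norm_zero]
  have hLc0 : Sc = 0 → Lc = 0 := by
    intro h
    rw [hLc]
    exact Finset.sum_eq_zero fun k _ => by rw [hczero h k, norm_zero]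
  have hSc0 : Sc = 0 := by
    by_contra hne0
    have hScpos : 0 < Sc := lt_of_le_of_ne hScnn (Ne.symm hne0)
    rcases eq_or_lt_of_le hSdnn with hSd0 | hSdpos
    · have hLd0' : Ld = 0 := hLd0 hSd0.symm
      rw [hLd0'] at hstar
      linarith [mul_pos hα hScpos, mul_nonneg hβ.le hSdnn, hstar]
    · have h5 : 0 ≤ (1 - μa * ((nx : ℝ) - 1)) * Sc + (1 - μb * ((ne : ℝ) - 1)) * Sd :=
        add_nonneg (mul_nonneg hα.le hScnn) (mul_nonneg hβ.le hSdnn)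
      have h6 : ((1 - μa * ((nx : ℝ) - 1)) * Sc + (1 - μb * ((ne : ℝ) - 1)) * Sd) ^ 2
          ≤ (2 * μm * (Lc * Ld)) ^ 2 := pow_le_pow_left₀ h5 hstar 2
      have hmul : Lc ^ 2 * Ld ^ 2 ≤ ((nx : ℝ) * Sc) * ((ne : ℝ) * Sd) :=
        mul_le_mul hLc2 hLd2 (sq_nonneg Ld) (by positivity)
      have hA1 : 4 * μm ^ 2 * (Lc ^ 2 * Ld ^ 2) ≤ 4 * μm ^ 2 * (((nx : ℝ) * Sc) * ((ne : ℝ) * Sd)) :=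
        mul_le_mul_of_nonneg_left hmul (by positivity)
      have hA2 : 4 * (μm ^ 2 * (nx : ℝ) * (ne : ℝ)) * (Sc * Sd)
          < 4 * ((1 - μa * ((nx : ℝ) - 1)) * (1 - μb * ((ne : ℝ) - 1))) * (Sc * Sd) := by
        have := mul_lt_mul_of_pos_right hAB (mul_pos hScpos hSdpos)
        linarith [this]
      have hA3 : 4 * ((1 - μa * ((nx : ℝ) - 1)) * (1 - μb * ((ne : ℝ) - 1))) * (Sc * Sd)
          ≤ ((1 - μa * ((nx : ℝ) - 1)) * Sc + (1 - μb * ((ne : ℝ) - 1)) * Sd) ^ 2 := by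
        linarith [sq_nonneg ((1 - μa * ((nx : ℝ) - 1)) * Sc - (1 - μb * ((ne : ℝ) - 1)) * Sd)]
      linarith [h6, hA1, hA2, hA3]
  have hSd0 : Sd = 0 := by
    have hLc0' : Lc = 0 := hLc0 hSc0
    rw [hLc0', hSc0] at hstar
    by_contra hne0
    have hpos : 0 < Sd := lt_of_le_of_ne hSdnn (Ne.symm hne0)
    linarith [mul_pos hβ hpos, hstar]
  intro σ
  rcases σ with k | l
  · simpa [hc] using hczero hSc0 k
  · simpa [hd] using hdzero hSd0 l
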